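/- Fix d ≥ 1 and partitions λ and μ, each with at most d parts. Then the following identity holds as rational functions in β and the variables y: G_μ(y_λ|y) · (wt(λ/μ) − 1) = ∑_{ν} β^{|ν/μ|} G_ν(y_λ|y), where wt(λ/μ) = ∏_{i=1}^{d} (1+β y_{μ_i+d−i+1}) / (1+β y_{λ_i+d−i+1}) and the sum is over all partitions ν with at most d parts such that ν ↦ μ. -/

import Mathlib

open Finset

namespace HookG

/-- Cells of the skew diagram λ/μ (0-indexed). -/
def skewCells (lam mu : YoungDiagram) : Finset (ℕ × ℕ) := lam.cells \ mu.cells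

/-- The maximal entry `m(T)` of a tableau (which is 0 outside the shape). -/
def maxEntry (lam mu : YoungDiagram) (T : ℕ × ℕ → ℕ) : ℕ := (skewCells lam mu).sup T

/-- `T` is a filling of λ/μ by positive integers, strictly increasing along rows and
down columns, and zero outside of λ/μ. -/
def IsIncreasing (lam mu : YoungDiagram) (T : ℕ × ℕ → ℕ) : Prop :=
  (∀ u, u ∉ skewCells lam mu → T u = 0) ∧
  (∀ u ∈ skewCells lam mu, 1 ≤ T u) ∧
  (∀ i j₁ j₂, j₁ < j₂ → (i, j₁) ∈ skewCells lam mu → (i, j₂) ∈ skewCells lam mu →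
      T (i, j₁) < T (i, j₂)) ∧
  (∀ i₁ i₂ j, i₁ < i₂ → (i₁, j) ∈ skewCells lam mu → (i₂, j) ∈ skewCells lam mu →
      T (i₁, j) < T (i₂, j))

/-- Standard increasing tableau: the set of entries is exactly `{1, …, m(T)}`. -/
def IsSIT (lam mu : YoungDiagram) (T : ℕ × ℕ → ℕ) : Prop :=
  IsIncreasing lam mu T ∧
  ∀ k, 1 ≤ k → k ≤ maxEntry lam mu T → ∃ u ∈ skewCells lam mu, T u = k

/-- `ν_{i+1}(T_{<k})` (for the 0-indexed row `i`): the number of cells in row `i` of the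
diagram consisting of μ together with the cells of `T` carrying an entry < k. -/
def nuRow (lam mu : YoungDiagram) (T : ℕ × ℕ → ℕ) (k i : ℕ) : ℕ :=
  (lam.cells.filter fun u => u.1 = i ∧ (u ∈ mu.cells ∨ (1 ≤ T u ∧ T u < k))).card

/-- Hook length of the (0-indexed) cell `u = (i,j)` of λ:
`h = λ_{i+1} + λ'_{j+1} - i - j - 1` (1-indexed: `λ_i − j + λ'_j − i + 1`). -/
def hook (lam : YoungDiagram) (u : ℕ × ℕ) : ℕ :=
  lam.rowLen u.1 + lam.colLen u.2 - u.1 - u.2 - 1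

/-- `|T|`, the sum of the entries of a tableau. -/
def entrySum (lam mu : YoungDiagram) (T : ℕ × ℕ → ℕ) : ℕ := ∑ u ∈ skewCells lam mu, T u

/-- `a(T_{≥k})`, the number of cells of `T` with entry ≥ k. -/
def aGe (lam mu : YoungDiagram) (T : ℕ × ℕ → ℕ) (k : ℕ) : ℕ :=
  ((skewCells lam mu).filter fun u => k ≤ T u).card

/-- The cell `(i,j)` of `D` is active: `(i+1,j), (i,j+1), (i+1,j+1)` all belong to `λ ∖ D`. -/
def ActiveCell (lam : YoungDiagram) (D : Finset (ℕ × ℕ)) (i j : ℕ) : Prop :=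
  (i, j) ∈ D ∧
  ((i + 1, j) ∈ lam.cells ∧ (i + 1, j) ∉ D) ∧
  ((i, j + 1) ∈ lam.cells ∧ (i, j + 1) ∉ D) ∧
  ((i + 1, j + 1) ∈ lam.cells ∧ (i + 1, j + 1) ∉ D)

/-- An excited move of type I (replace the active cell by `(i+1,j+1)`)
or of type II (add `(i+1,j+1)` keeping the active cell). -/
def GenMove (lam : YoungDiagram) (D D' : Finset (ℕ × ℕ)) : Prop :=
  ∃ i j, ActiveCell lam D i j ∧
    (D' = insert (i + 1, j + 1) (D.erase (i, j)) ∨ D' = insert (i + 1, j + 1) D)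

/-- The set `D(λ/μ)` of generalized excited diagrams: all subsets of λ obtained from the
Young diagram of μ by sequences of excited moves of both types. -/
def GenExcited (lam mu : YoungDiagram) : Set (Finset (ℕ × ℕ)) :=
  {D | Relation.ReflTransGen (GenMove lam) mu.cells D}

end HookG

namespace HookG

variable {K : Type*} [Field K]

/-- `x ⊕ y = x + y + βxy`. -/
def oplus (β a b : K) : K := a + b + β * a * b

/-- `⊖ v = (0 − v)/(1 + βv)`. -/
noncomputable def ominus (β v : K) : K := (0 - v) / (1 + β * v)

/-- `[x|y]^k = (x ⊕ y₁)(x ⊕ y₂)⋯(x ⊕ y_k)`. -/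
def bracket (β : K) (y : ℕ → K) (x : K) (k : ℕ) : K :=
  ∏ t ∈ Finset.range k, oplus β x (y (t + 1))

/-- The factorial Grothendieck polynomial
`G_μ(x₁,…,x_d|y) = det([x_i|y]^{μ_j+d−j}(1+βx_i)^{j−1})_{i,j=1}^d / ∏_{i<j}(x_i−x_j)`. -/
noncomputable def Gfact (d : ℕ) (β : K) (y : ℕ → K) (mu : YoungDiagram) (x : Fin d → K) : K :=
  Matrix.det (Matrix.of fun i j : Fin d =>
      bracket β y (x i) (mu.rowLen j + (d - 1 - (j : ℕ))) * (1 + β * x i) ^ (j : ℕ))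
    / ∏ i : Fin d, ∏ j ∈ Finset.Ioi i, (x i - x j)

/-- The evaluation point `y_λ = (⊖y_{λ₁+d}, ⊖y_{λ₂+d−1}, …, ⊖y_{λ_d+1})`. -/
noncomputable def yPoint (d : ℕ) (β : K) (y : ℕ → K) (lam : YoungDiagram) : Fin d → K :=
  fun i => ominus β (y (lam.rowLen i + (d - (i : ℕ))))

/-- `ν ↦ μ`: the skew shape ν/μ is nonempty and its cells lie in pairwise distinct
rows and pairwise distinct columns. -/
def VMapsTo (nu mu : YoungDiagram) : Prop :=
  mu ≤ nu ∧ nu ≠ mu ∧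
  ∀ u ∈ nu.cells \ mu.cells, ∀ v ∈ nu.cells \ mu.cells, u ≠ v → u.1 ≠ v.1 ∧ u.2 ≠ v.2

/-- The Young diagram of the partition `(1)`. -/
def oneBox : YoungDiagram where
  cells := {(0, 0)}
  isLowerSet := by
    intro a b hba ha
    simp only [Finset.coe_singleton, Set.mem_singleton_iff] at ha ⊢
    subst ha
    exact Prod.ext_iff.mpr ⟨Nat.le_zero.mp hba.1, Nat.le_zero.mp hba.2⟩

end HookG
open HookG

/-- The field of rational functions in β and the variables y₁, y₂, …. -/
abbrev KY := FractionRing (MvPolynomial ℕ ℚ)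

noncomputable def βv : KY := algebraMap (MvPolynomial ℕ ℚ) KY (MvPolynomial.X 0)

noncomputable def yv (i : ℕ) : KY := algebraMap (MvPolynomial ℕ ℚ) KY (MvPolynomial.X i)


namespace HookG
variable {K : Type*} [Field K]

lemma one_add_mul_ominus (β v : K) (h : 1 + β * v ≠ 0) :
    1 + β * ominus β v = (1 + β * v)⁻¹ := by
  rw [ominus]
  field_simp
  ring


lemma bracket_succ (β : K) (y : ℕ → K) (x : K) (k : ℕ) :
    bracket β y x (k + 1) = bracket β y x k * oplus β x (y (k + 1)) :=
  Finset.prod_range_succ _ _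

lemma key_col (β : K) (y : ℕ → K) (x : K) (k j : ℕ) :
    bracket β y x k * (1 + β * x) ^ j + β * (bracket β y x (k + 1) * (1 + β * x) ^ j)
      = (1 + β * y (k + 1)) * (bracket β y x k * ((1 + β * x) ^ j * (1 + β * x))) := by
  rw [bracket_succ]; unfold oplus; ring

lemma detRow_eq {d : ℕ} (m : Fin d → Fin d → K) :
    Matrix.detRowAlternating m = Matrix.det (Matrix.of fun i j => m j i) := by
  rw [← Matrix.det_transpose]; rfl

section Det

variable (d : ℕ) (β : K) (y : ℕ → K) (x : Fin d → K) (mu : YoungDiagram)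

/-- exponents -/
def Ee (j : ℕ) : ℕ := mu.rowLen j + (d - 1 - j)

def DS (S : Finset (Fin d)) : K :=
  Matrix.det (Matrix.of fun i j : Fin d =>
    bracket β y (x i) (Ee d mu j + (if j ∈ S then 1 else 0)) * (1 + β * x i) ^ (j : ℕ))

def uRow (j : Fin d) : Fin d → K :=
  fun i => bracket β y (x i) (Ee d mu j) * (1 + β * x i) ^ (j : ℕ)

def vRow (j : Fin d) : Fin d → K :=
  fun i => β * (bracket β y (x i) (Ee d mu j + 1) * (1 + β * x i) ^ (j : ℕ))

lemma expand :
    (∏ j : Fin d, (1 + β * y (Ee d mu j + 1))) * ((∏ i, (1 + β * x i)) * DS d β y x mu ∅)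
      = ∑ S : Finset (Fin d),
          Matrix.detRowAlternating ((S.piecewise (vRow d β y x mu) (uRow d β y x mu)) :
            Fin d → Fin d → K) := by
  have hsum : ∑ S : Finset (Fin d),
      Matrix.detRowAlternating ((S.piecewise (vRow d β y x mu) (uRow d β y x mu)) :
        Fin d → Fin d → K)
      = Matrix.detRowAlternating (vRow d β y x mu + uRow d β y x mu) :=
    (MultilinearMap.map_add_univ
      (Matrix.detRowAlternating (R := K) (n := Fin d)).toMultilinearMap _ _).symm
  rw [hsum]
  have h1 : (vRow d β y x mu + uRow d β y x mu) = fun j : Fin d => fun i =>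
      (1 + β * y (Ee d mu j + 1)) *
        (bracket β y (x i) (Ee d mu j) * ((1 + β * x i) ^ (j : ℕ) * (1 + β * x i))) := by
    funext j i
    simp only [Pi.add_apply, uRow, vRow]
    rw [add_comm, key_col]
  rw [h1, detRow_eq]
  have h2 : (Matrix.of fun i j : Fin d =>
      (1 + β * y (Ee d mu j + 1)) *
        (bracket β y (x i) (Ee d mu j) * ((1 + β * x i) ^ (j : ℕ) * (1 + β * x i))))
      = Matrix.of fun i j : Fin d => (1 + β * y (Ee d mu j + 1)) *
          (Matrix.of fun i j : Fin d =>
            (1 + β * x i) * (Matrix.of fun i j : Fin d =>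
              bracket β y (x i) (Ee d mu j + (if j ∈ (∅ : Finset (Fin d)) then 1 else 0)) *
                (1 + β * x i) ^ (j : ℕ)) i j) i j := by
    funext i j
    simp only [Matrix.of_apply, Finset.notMem_empty, if_false, add_zero]
    ring
  rw [h2, Matrix.det_mul_row, Matrix.det_mul_column]
  rfl

lemma piecewise_det (S : Finset (Fin d)) :
    Matrix.detRowAlternating ((S.piecewise (vRow d β y x mu) (uRow d β y x mu)) :
        Fin d → Fin d → K)
      = β ^ S.card * DS d β y x mu S := by
  have h1 : (S.piecewise (vRow d β y x mu) (uRow d β y x mu) : Fin d → Fin d → K)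
      = fun j : Fin d => (if j ∈ S then β else 1) •
          (fun i => bracket β y (x i) (Ee d mu j + (if j ∈ S then 1 else 0)) *
            (1 + β * x i) ^ (j : ℕ)) := by
    funext j i
    by_cases hj : j ∈ S <;>
      simp [Finset.piecewise, hj, uRow, vRow]
  rw [h1]
  have h2 := MultilinearMap.map_smul_univ
    (Matrix.detRowAlternating (R := K) (n := Fin d)).toMultilinearMap
    (fun j : Fin d => if j ∈ S then β else 1)
    (fun j : Fin d => fun i => bracket β y (x i) (Ee d mu j + (if j ∈ S then 1 else 0)) *
      (1 + β * x i) ^ (j : ℕ))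
  rw [show (∏ j : Fin d, if j ∈ S then β else 1) = β ^ S.card by
    rw [Finset.prod_ite_mem, Finset.univ_inter, Finset.prod_const], smul_eq_mul] at h2
  exact h2.trans (congrArg (β ^ S.card * ·) ((detRow_eq _).trans rfl))

/-- toggle membership of p -/
def tgl (p : Fin d) (S : Finset (Fin d)) : Finset (Fin d) :=
  if p ∈ S then S.erase p else insert p S

lemma mem_tgl {p j : Fin d} {S : Finset (Fin d)} :
    j ∈ tgl d p S ↔ (if j = p then p ∉ S else j ∈ S) := by
  unfold tgl
  by_cases hp : p ∈ S <;> by_cases hj : j = p <;>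
    simp [hp, hj, Finset.mem_erase, Finset.mem_insert]

lemma cancel (S : Finset (Fin d)) (t : Fin d) (ht : t ∈ S) (ht0 : (t : ℕ) ≠ 0)
    (hteq : mu.rowLen ((t : ℕ) - 1) = mu.rowLen (t : ℕ))
    (p : Fin d) (hp : (p : ℕ) = (t : ℕ) - 1) :
    Matrix.detRowAlternating ((S.piecewise (vRow d β y x mu) (uRow d β y x mu)) :
        Fin d → Fin d → K)
      + Matrix.detRowAlternating (((tgl d p S).piecewise (vRow d β y x mu) (uRow d β y x mu)) :
        Fin d → Fin d → K) = 0 := by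
  have hpt : p ≠ t := by
    intro h; rw [h] at hp; omega
  have hEp : Ee d mu p = Ee d mu t + 1 := by
    have h1 : (t : ℕ) < d := t.isLt
    have h2 : mu.rowLen (p : ℕ) = mu.rowLen (t : ℕ) := by rw [hp, hteq]
    unfold Ee
    rw [h2, hp]
    omega
  set f := (Matrix.detRowAlternating (R := K) (n := Fin d)) with hf
  set m := (S.piecewise (vRow d β y x mu) (uRow d β y x mu) : Fin d → Fin d → K) with hm
  -- the common scaled row
  set hvec : Fin d → K := fun i => bracket β y (x i) (Ee d mu t + 1) * (1 + β * x i) ^ (t : ℕ)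
    with hhvec
  have hup : uRow d β y x mu p + vRow d β y x mu p
      = (1 + β * y (Ee d mu t + 2)) • hvec := by
    funext i
    have : ((p : ℕ) + 1) = (t : ℕ) := by omega
    simp only [Pi.add_apply, Pi.smul_apply, smul_eq_mul, uRow, vRow, hhvec]
    rw [key_col, hEp, ← pow_succ, this]
  have hmain : ∀ b : Fin d → K, f (Function.update m p b)
      = f (Function.update m p b) := fun _ => rfl
  -- f (update m p hvec) = 0
  have hzero : f (Function.update m p hvec) = 0 := by
    set m' := Function.update m p hvec with hm'
    have hmt : m' t = β • hvec := by
      rw [hm', Function.update_of_ne (Ne.symm hpt)]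
      funext i
      simp only [hm, Finset.piecewise, ht, if_pos, Pi.smul_apply, smul_eq_mul, vRow, hhvec]
    have h1 : m' = Function.update m' t (β • hvec) := by
      rw [← hmt, Function.update_eq_self]
    rw [h1, f.map_update_smul, smul_eq_mul]
    have h2 : (Function.update m' t hvec) p = (Function.update m' t hvec) t := by
      rw [Function.update_of_ne hpt, Function.update_self, hm', Function.update_self]
    rw [f.map_eq_zero_of_eq _ h2 hpt, mul_zero]
  -- now express the two piecewise functions as updates
  have hS : m = Function.update m p (if p ∈ S then vRow d β y x mu p else uRow d β y x mu p) := by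
    have : m p = (if p ∈ S then vRow d β y x mu p else uRow d β y x mu p) := by
      simp [hm, Finset.piecewise]
    rw [← this, Function.update_eq_self]
  have hT : ((tgl d p S).piecewise (vRow d β y x mu) (uRow d β y x mu) : Fin d → Fin d → K)
      = Function.update m p (if p ∈ S then uRow d β y x mu p else vRow d β y x mu p) := by
    funext j
    by_cases hj : j = p
    · subst hj
      rw [Function.update_self]
      have : j ∈ tgl d j S ↔ j ∉ S := by rw [mem_tgl]; simp
      by_cases hjS : j ∈ S <;> simp [Finset.piecewise, this, hjS]
    · rw [Function.update_of_ne hj]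
      have : j ∈ tgl d p S ↔ j ∈ S := by rw [mem_tgl]; simp [hj]
      by_cases hjS : j ∈ S <;> simp [Finset.piecewise, this, hjS, hm]
  show f m + f _ = 0
  rw [hT]
  nth_rewrite 1 [hS]
  by_cases hpS : p ∈ S
  · simp only [hpS, if_true]
    rw [← f.map_update_add]
    have : vRow d β y x mu p + uRow d β y x mu p = (1 + β * y (Ee d mu t + 2)) • hvec := by
      rw [add_comm]; exact hup
    rw [this, f.map_update_smul, hzero, smul_zero]
  · simp only [hpS, if_false]
    rw [← f.map_update_add, hup, f.map_update_smul, hzero, smul_zero]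

/-- legal positions -/
def Aok : Finset (Fin d) :=
  Finset.univ.filter fun j : Fin d =>
    (j : ℕ) = 0 ∨ mu.rowLen ((j : ℕ) - 1) ≠ mu.rowLen (j : ℕ)

def badFil (S : Finset (Fin d)) : Finset (Fin d) :=
  S.filter fun j : Fin d => ¬((j : ℕ) = 0 ∨ mu.rowLen ((j : ℕ) - 1) ≠ mu.rowLen (j : ℕ))

lemma badFil_nonempty {S : Finset (Fin d)} (h : ¬S ⊆ Aok d mu) :
    (badFil d mu S).Nonempty := by
  rw [Finset.not_subset] at h
  obtain ⟨j, hjS, hjA⟩ := h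
  exact ⟨j, Finset.mem_filter.mpr ⟨hjS, by simpa [Aok] using hjA⟩⟩

def tog (S : Finset (Fin d)) : Finset (Fin d) :=
  if h : (badFil d mu S).Nonempty then
    tgl d ⟨((badFil d mu S).max' h : ℕ) - 1,
      lt_of_le_of_lt (Nat.sub_le _ _) ((badFil d mu S).max' h).isLt⟩ S
  else S

lemma max'_badFil_spec {S : Finset (Fin d)} (h : (badFil d mu S).Nonempty) :
    (badFil d mu S).max' h ∈ S ∧ (((badFil d mu S).max' h : Fin d) : ℕ) ≠ 0 ∧
      mu.rowLen ((((badFil d mu S).max' h : Fin d) : ℕ) - 1)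
        = mu.rowLen (((badFil d mu S).max' h : Fin d) : ℕ) := by
  have htmem : (badFil d mu S).max' h ∈ badFil d mu S := Finset.max'_mem _ h
  have h1 : (badFil d mu S).max' h ∈ S := (Finset.mem_filter.mp htmem).1
  have h2 := (Finset.mem_filter.mp htmem).2
  push_neg at h2
  exact ⟨h1, h2⟩

lemma mem_badFil {S : Finset (Fin d)} {j : Fin d} (hjS : j ∈ S) (h0 : (j : ℕ) ≠ 0)
    (heq : mu.rowLen ((j : ℕ) - 1) = mu.rowLen (j : ℕ)) : j ∈ badFil d mu S :=
  Finset.mem_filter.mpr ⟨hjS, by push_neg; exact ⟨h0, heq⟩⟩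

lemma bad_sum :
    ∑ S ∈ Finset.univ.filter (fun S : Finset (Fin d) => ¬S ⊆ Aok d mu),
      Matrix.detRowAlternating ((S.piecewise (vRow d β y x mu) (uRow d β y x mu)) :
        Fin d → Fin d → K) = 0 := by
  apply Finset.sum_involution (fun S _ => tog d mu S)
  · -- pairwise cancellation
    intro S hS
    rw [Finset.mem_filter] at hS
    have h := badFil_nonempty d mu hS.2
    obtain ⟨htS, ht0, hteq⟩ := max'_badFil_spec d mu h
    have htog : tog d mu S = tgl d ⟨(((badFil d mu S).max' h : Fin d) : ℕ) - 1,
        lt_of_le_of_lt (Nat.sub_le _ _) ((badFil d mu S).max' h).isLt⟩ S := by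
      rw [tog, dif_pos h]
    rw [htog]
    exact cancel d β y x mu S _ htS ht0 hteq _ rfl
  · -- tog S ≠ S
    intro S hS _
    rw [Finset.mem_filter] at hS
    have h := badFil_nonempty d mu hS.2
    rw [tog, dif_pos h]
    set p : Fin d := ⟨(((badFil d mu S).max' h : Fin d) : ℕ) - 1,
      lt_of_le_of_lt (Nat.sub_le _ _) ((badFil d mu S).max' h).isLt⟩
    intro hcon
    have h1 : p ∈ tgl d p S ↔ p ∉ S := by rw [mem_tgl]; simp
    rw [hcon] at h1
    tauto
  · -- membership
    intro S hS
    rw [Finset.mem_filter] at hS ⊢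
    refine ⟨Finset.mem_univ _, ?_⟩
    have h := badFil_nonempty d mu hS.2
    obtain ⟨htS, ht0, hteq⟩ := max'_badFil_spec d mu h
    rw [tog, dif_pos h]
    set t : Fin d := (badFil d mu S).max' h with hht
    set p : Fin d := ⟨(t : ℕ) - 1, lt_of_le_of_lt (Nat.sub_le _ _) t.isLt⟩ with hhp
    have hpt : t ≠ p := by
      intro hcon
      have : (t : ℕ) = (p : ℕ) := by rw [hcon]
      simp only [hhp] at this
      omega
    have htT : t ∈ tgl d p S := by rw [mem_tgl, if_neg hpt]; exact htS
    rw [Finset.not_subset]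
    refine ⟨t, htT, ?_⟩
    simp only [Aok, Finset.mem_filter, Finset.mem_univ, true_and]
    push_neg
    exact ⟨ht0, hteq⟩
  · -- involution
    intro S hS
    rw [Finset.mem_filter] at hS
    have h := badFil_nonempty d mu hS.2
    obtain ⟨htS, ht0, hteq⟩ := max'_badFil_spec d mu h
    have htog : tog d mu S = tgl d ⟨(((badFil d mu S).max' h : Fin d) : ℕ) - 1,
        lt_of_le_of_lt (Nat.sub_le _ _) ((badFil d mu S).max' h).isLt⟩ S := by
      rw [tog, dif_pos h]
    set t : Fin d := (badFil d mu S).max' h with hht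
    set p : Fin d := ⟨(t : ℕ) - 1, lt_of_le_of_lt (Nat.sub_le _ _) t.isLt⟩ with hhp
    have hpt : t ≠ p := by
      intro hcon
      have : (t : ℕ) = (p : ℕ) := by rw [hcon]
      simp only [hhp] at this
      omega
    have hple : p ≤ t := by
      rw [Fin.le_def]; simp only [hhp]; omega
    have htT : t ∈ tgl d p S := by rw [mem_tgl, if_neg hpt]; exact htS
    have h2 : (badFil d mu (tgl d p S)).Nonempty :=
      ⟨t, mem_badFil d mu htT ht0 hteq⟩
    have hmax : (badFil d mu (tgl d p S)).max' h2 = t := by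
      apply le_antisymm
      · apply Finset.max'_le
        intro j hj
        have hj1 := (Finset.mem_filter.mp hj).1
        have hj2 := (Finset.mem_filter.mp hj).2
        rw [mem_tgl] at hj1
        by_cases hjp : j = p
        · rw [hjp]; exact hple
        · rw [if_neg hjp] at hj1
          exact Finset.le_max' _ j (Finset.mem_filter.mpr ⟨hj1, hj2⟩)
      · exact Finset.le_max' _ t (mem_badFil d mu htT ht0 hteq)
    rw [htog, tog, dif_pos h2]
    have heqp : (⟨(((badFil d mu (tgl d p S)).max' h2 : Fin d) : ℕ) - 1,
        lt_of_le_of_lt (Nat.sub_le _ _) ((badFil d mu (tgl d p S)).max' h2).isLt⟩ : Fin d)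
        = p := by
      apply Fin.ext
      rw [hmax]
    rw [heqp]
    unfold tgl
    by_cases hpS : p ∈ S
    · rw [if_pos hpS, if_neg (Finset.notMem_erase p S), Finset.insert_erase hpS]
    · rw [if_neg hpS, if_pos (Finset.mem_insert_self p S), Finset.erase_insert hpS]

lemma master :
    (∏ j : Fin d, (1 + β * y (Ee d mu j + 1))) * ((∏ i, (1 + β * x i)) * DS d β y x mu ∅)
      = ∑ S ∈ Finset.univ.filter (fun S : Finset (Fin d) => S ⊆ Aok d mu),
          β ^ S.card * DS d β y x mu S := by
  rw [expand]
  rw [← Finset.sum_filter_add_sum_filter_not Finset.univ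
    (fun S : Finset (Fin d) => S ⊆ Aok d mu), bad_sum, add_zero]
  exact Finset.sum_congr rfl fun S _ => piecewise_det d β y x mu S

end Det

section YD

lemma rowLen_eq_of (nu : YoungDiagram) (a L : ℕ) (h : ∀ b, (a, b) ∈ nu ↔ b < L) :
    nu.rowLen a = L := by
  rcases Nat.lt_trichotomy (nu.rowLen a) L with hl | he | hg
  · have := (h (nu.rowLen a)).mpr hl
    rw [YoungDiagram.mem_iff_lt_rowLen] at this
    omega
  · exact he
  · have : (a, L) ∈ nu := YoungDiagram.mem_iff_lt_rowLen.mpr hg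
    rw [h] at this
    omega

lemma yd_ext {nu nu' : YoungDiagram} (h : ∀ a, nu.rowLen a = nu'.rowLen a) : nu = nu' := by
  have : nu.cells = nu'.cells := by
    ext ⟨a, b⟩
    rw [YoungDiagram.mem_cells, YoungDiagram.mem_cells, YoungDiagram.mem_iff_lt_rowLen,
      YoungDiagram.mem_iff_lt_rowLen, h]
  exact YoungDiagram.ext this

lemma rowLen_zero_of_le {nu : YoungDiagram} {d a : ℕ} (h : nu.colLen 0 ≤ d) (ha : d ≤ a) :
    nu.rowLen a = 0 := by
  by_contra hc
  have : (a, 0) ∈ nu := YoungDiagram.mem_iff_lt_rowLen.mpr (by omega)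
  rw [YoungDiagram.mem_iff_lt_colLen] at this
  omega

variable (d : ℕ) (mu : YoungDiagram)

def nuCells (S : Finset (Fin d)) : Finset (ℕ × ℕ) :=
  mu.cells ∪ S.image fun j : Fin d => ((j : ℕ), mu.rowLen (j : ℕ))

open Classical in
noncomputable def nuOf (S : Finset (Fin d)) : YoungDiagram :=
  if h : IsLowerSet ((nuCells d mu S : Finset (ℕ × ℕ)) : Set (ℕ × ℕ)) then ⟨nuCells d mu S, h⟩
  else mu

lemma mem_nuCells {S : Finset (Fin d)} {a b : ℕ} :
    (a, b) ∈ nuCells d mu S ↔ (a, b) ∈ mu ∨ ∃ j ∈ S, (j : ℕ) = a ∧ mu.rowLen a = b := by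
  unfold nuCells
  rw [Finset.mem_union, Finset.mem_image]
  constructor
  · rintro (h | ⟨j, hj, hje⟩)
    · exact Or.inl h
    · rw [Prod.ext_iff] at hje
      simp only at hje
      exact Or.inr ⟨j, hj, hje.1, by rw [← hje.2, hje.1]⟩
  · rintro (h | ⟨j, hj, hja, hjb⟩)
    · exact Or.inl h
    · exact Or.inr ⟨j, hj, by rw [hja, hjb]⟩

lemma lower_nuCells {S : Finset (Fin d)} (hS : S ⊆ Aok d mu) :
    IsLowerSet ((nuCells d mu S : Finset (ℕ × ℕ)) : Set (ℕ × ℕ)) := by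
  rintro ⟨c, e⟩ ⟨a, b⟩ hab hce
  simp only [Finset.mem_coe] at hce ⊢
  obtain ⟨hac, hbe⟩ := hab
  simp only at hac hbe
  rw [mem_nuCells] at hce ⊢
  rcases hce with hmu | ⟨j, hj, hjc, hje⟩
  · exact Or.inl (mu.up_left_mem hac hbe hmu)
  · -- (c, e) = (j, mu.rowLen j)
    subst hjc
    by_cases hb : b < mu.rowLen a
    · exact Or.inl (YoungDiagram.mem_iff_lt_rowLen.mpr hb)
    · push_neg at hb
      have h1 : mu.rowLen (j : ℕ) ≤ mu.rowLen a := mu.rowLen_anti _ _ hac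
      have hba : b = mu.rowLen a := by omega
      have haj : a = (j : ℕ) := by
        by_contra hne
        have hlt : a < (j : ℕ) := lt_of_le_of_ne hac hne
        have hj0 : (j : ℕ) ≠ 0 := by omega
        have := hS hj
        simp only [Aok, Finset.mem_filter, Finset.mem_univ, true_and] at this
        rcases this with h0 | hlegal
        · omega
        · have h2 : mu.rowLen (j : ℕ) ≤ mu.rowLen ((j : ℕ) - 1) :=
            mu.rowLen_anti _ _ (by omega)
          have h3 : mu.rowLen ((j : ℕ) - 1) ≤ mu.rowLen a := mu.rowLen_anti _ _ (by omega)
          omega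
      exact Or.inr ⟨j, hj, haj.symm, hba.symm⟩

lemma nuOf_cells {S : Finset (Fin d)} (hS : S ⊆ Aok d mu) :
    (nuOf d mu S).cells = nuCells d mu S := by
  rw [nuOf]
  rw [dif_pos (lower_nuCells d mu hS)]

lemma rowLen_nuOf {S : Finset (Fin d)} (hS : S ⊆ Aok d mu) (a : ℕ) :
    (nuOf d mu S).rowLen a = mu.rowLen a + (if ∃ j ∈ S, (j : ℕ) = a then 1 else 0) := by
  apply rowLen_eq_of
  intro b
  have hmem : (a, b) ∈ nuOf d mu S ↔ (a, b) ∈ nuCells d mu S := by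
    rw [← YoungDiagram.mem_cells, nuOf_cells d mu hS]
  rw [hmem, mem_nuCells, YoungDiagram.mem_iff_lt_rowLen]
  by_cases hex : ∃ j ∈ S, (j : ℕ) = a
  · obtain ⟨j, hj, hja⟩ := hex
    rw [if_pos ⟨j, hj, hja⟩]
    constructor
    · rintro (h | ⟨j', _, _, hje⟩) <;> omega
    · intro h
      by_cases hb : b < mu.rowLen a
      · exact Or.inl hb
      · exact Or.inr ⟨j, hj, hja, by omega⟩
  · rw [if_neg hex]
    constructor
    · rintro (h | ⟨j', hj', hja', _⟩)
      · omega
      · exact absurd ⟨j', hj', hja'⟩ hex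
    · intro h; exact Or.inl (by omega)

lemma card_nuOf {S : Finset (Fin d)} (hS : S ⊆ Aok d mu) :
    (nuOf d mu S).card = mu.card + S.card := by
  show (nuOf d mu S).cells.card = mu.cells.card + S.card
  rw [nuOf_cells d mu hS, nuCells, Finset.card_union_of_disjoint, Finset.card_image_of_injective]
  · intro a b hab
    rw [Prod.ext_iff] at hab
    exact Fin.ext hab.1
  · rw [Finset.disjoint_right]
    rintro ⟨a, b⟩ hmem hmu
    rw [Finset.mem_image] at hmem
    obtain ⟨j, _, hje⟩ := hmem
    rw [Prod.ext_iff] at hje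
    simp only at hje
    rw [YoungDiagram.mem_cells, YoungDiagram.mem_iff_lt_rowLen] at hmu
    obtain ⟨h1, h2⟩ := hje
    rw [h1] at h2
    omega

lemma colLen_nuOf {S : Finset (Fin d)} (hS : S ⊆ Aok d mu) (hmu : mu.colLen 0 ≤ d) :
    (nuOf d mu S).colLen 0 ≤ d := by
  by_contra hc
  push_neg at hc
  have h1 : (d, 0) ∈ nuOf d mu S := YoungDiagram.mem_iff_lt_colLen.mpr hc
  have h2 : (d, 0) ∈ nuCells d mu S := by
    rw [← nuOf_cells d mu hS]
    exact h1
  rw [mem_nuCells] at h2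
  rcases h2 with h | ⟨j, _, hj, _⟩
  · rw [YoungDiagram.mem_iff_lt_colLen] at h
    omega
  · have := j.isLt
    omega

lemma sdiff_nuOf {S : Finset (Fin d)} (hS : S ⊆ Aok d mu) :
    (nuOf d mu S).cells \ mu.cells
      = S.image fun j : Fin d => ((j : ℕ), mu.rowLen (j : ℕ)) := by
  have hdis : Disjoint mu.cells (S.image fun j : Fin d => ((j : ℕ), mu.rowLen (j : ℕ))) := by
    rw [Finset.disjoint_right]
    rintro ⟨a, b⟩ hmem hmu
    rw [Finset.mem_image] at hmem
    obtain ⟨j, _, hje⟩ := hmem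
    rw [Prod.ext_iff] at hje
    simp only at hje
    rw [YoungDiagram.mem_cells, YoungDiagram.mem_iff_lt_rowLen] at hmu
    obtain ⟨h1, h2⟩ := hje
    rw [h1] at h2
    omega
  rw [nuOf_cells d mu hS, nuCells, Finset.union_sdiff_cancel_left hdis]

lemma rowLen_lt_of_mem_Aok {j k : Fin d} (hj : j ∈ Aok d mu) (hkj : (k : ℕ) < (j : ℕ)) :
    mu.rowLen (j : ℕ) < mu.rowLen (k : ℕ) := by
  simp only [Aok, Finset.mem_filter, Finset.mem_univ, true_and] at hj
  rcases hj with h0 | hne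
  · omega
  · have h1 : mu.rowLen ((j : ℕ) - 1) ≤ mu.rowLen (k : ℕ) := mu.rowLen_anti _ _ (by omega)
    have h2 : mu.rowLen (j : ℕ) ≤ mu.rowLen ((j : ℕ) - 1) := mu.rowLen_anti _ _ (by omega)
    omega

lemma vMapsTo_nuOf {S : Finset (Fin d)} (hS : S ⊆ Aok d mu) (hne : S.Nonempty) :
    VMapsTo (nuOf d mu S) mu := by
  refine ⟨?_, ?_, ?_⟩
  · show mu.cells ⊆ (nuOf d mu S).cells
    rw [nuOf_cells d mu hS, nuCells]
    exact Finset.subset_union_left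
  · obtain ⟨j, hj⟩ := hne
    intro hcon
    have h1 := rowLen_nuOf d mu hS (j : ℕ)
    rw [hcon, if_pos ⟨j, hj, rfl⟩] at h1
    omega
  · rintro ⟨a, b⟩ ha ⟨c, e⟩ hc hne'
    rw [sdiff_nuOf d mu hS, Finset.mem_image] at ha hc
    obtain ⟨j, hjS, hje⟩ := ha
    obtain ⟨k, hkS, hke⟩ := hc
    rw [Prod.ext_iff] at hje hke
    simp only at hje hke
    obtain ⟨hja, hjb⟩ := hje
    obtain ⟨hkc, hke'⟩ := hke
    have hjk : j ≠ k := by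
      intro hcon
      apply hne'
      rw [← hja, ← hjb, ← hkc, ← hke', hcon]
    constructor
    · rw [← hja, ← hkc]
      exact fun hcon => hjk (Fin.ext hcon)
    · rw [← hjb, ← hke', ← hja, ← hkc]
      rcases Nat.lt_or_ge (j : ℕ) (k : ℕ) with hlt | hge
      · exact (rowLen_lt_of_mem_Aok d mu (hS hkS) hlt).ne'
      · have hlt : (k : ℕ) < (j : ℕ) := by
          rcases Nat.lt_or_ge (k : ℕ) (j : ℕ) with h | h
          · exact h
          · exact absurd (Fin.ext (by omega : (j : ℕ) = (k : ℕ))) hjk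
        exact (rowLen_lt_of_mem_Aok d mu (hS hjS) hlt).ne

section Backward

variable {nu : YoungDiagram}

lemma le_rowLen_of_le {mu' : YoungDiagram} (h : mu' ≤ nu) (a : ℕ) :
    mu'.rowLen a ≤ nu.rowLen a := by
  by_contra hc
  push_neg at hc
  have h1 : (a, nu.rowLen a) ∈ mu' := YoungDiagram.mem_iff_lt_rowLen.mpr hc
  have h2 : (a, nu.rowLen a) ∈ nu := h h1
  rw [YoungDiagram.mem_iff_lt_rowLen] at h2
  omega

lemma rowLen_le_succ (hv : VMapsTo nu mu) (a : ℕ) :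
    nu.rowLen a ≤ mu.rowLen a + 1 := by
  by_contra hc
  push_neg at hc
  have h1 : ((a, mu.rowLen a) : ℕ × ℕ) ∈ nu.cells \ mu.cells := by
    rw [Finset.mem_sdiff]
    constructor
    · rw [YoungDiagram.mem_cells, YoungDiagram.mem_iff_lt_rowLen]; omega
    · rw [YoungDiagram.mem_cells, YoungDiagram.mem_iff_lt_rowLen]; omega
  have h2 : ((a, mu.rowLen a + 1) : ℕ × ℕ) ∈ nu.cells \ mu.cells := by
    rw [Finset.mem_sdiff]
    constructor
    · rw [YoungDiagram.mem_cells, YoungDiagram.mem_iff_lt_rowLen]; omega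
    · rw [YoungDiagram.mem_cells, YoungDiagram.mem_iff_lt_rowLen]; omega
  have := (hv.2.2 _ h1 _ h2 (by simp)).1
  simp at this

def Sof (nu : YoungDiagram) : Finset (Fin d) :=
  Finset.univ.filter fun j : Fin d => mu.rowLen (j : ℕ) < nu.rowLen (j : ℕ)

lemma Sof_subset_Aok (hv : VMapsTo nu mu) : Sof d mu nu ⊆ Aok d mu := by
  intro j hj
  simp only [Sof, Finset.mem_filter, Finset.mem_univ, true_and] at hj
  simp only [Aok, Finset.mem_filter, Finset.mem_univ, true_and]
  by_contra hc
  push_neg at hc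
  obtain ⟨hj0, hjeq⟩ := hc
  -- nu_{j-1} = mu_{j-1} + 1 as well, giving two cells in the same column
  have h1 : nu.rowLen (j : ℕ) = mu.rowLen (j : ℕ) + 1 := by
    have := rowLen_le_succ mu hv (j : ℕ)
    omega
  have h2 : nu.rowLen ((j : ℕ) - 1) = mu.rowLen ((j : ℕ) - 1) + 1 := by
    have ha := nu.rowLen_anti ((j : ℕ) - 1) (j : ℕ) (by omega)
    have hb := rowLen_le_succ mu hv ((j : ℕ) - 1)
    omega
  have hc1 : (((j : ℕ), mu.rowLen (j : ℕ)) : ℕ × ℕ) ∈ nu.cells \ mu.cells := by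
    rw [Finset.mem_sdiff]
    constructor
    · rw [YoungDiagram.mem_cells, YoungDiagram.mem_iff_lt_rowLen]; omega
    · rw [YoungDiagram.mem_cells, YoungDiagram.mem_iff_lt_rowLen]; omega
  have hc2 : ((((j : ℕ) - 1), mu.rowLen ((j : ℕ) - 1)) : ℕ × ℕ) ∈ nu.cells \ mu.cells := by
    rw [Finset.mem_sdiff]
    constructor
    · rw [YoungDiagram.mem_cells, YoungDiagram.mem_iff_lt_rowLen]; omega
    · rw [YoungDiagram.mem_cells, YoungDiagram.mem_iff_lt_rowLen]; omega
  have hne : (((j : ℕ), mu.rowLen (j : ℕ)) : ℕ × ℕ) ≠ (((j : ℕ) - 1), mu.rowLen ((j : ℕ) - 1)) := by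
    intro hcon
    rw [Prod.ext_iff] at hcon
    simp only at hcon
    omega
  have := (hv.2.2 _ hc1 _ hc2 hne).2
  simp only at this
  rw [hjeq] at this
  exact this rfl

lemma nuOf_Sof (hv : VMapsTo nu mu) (hnu : nu.colLen 0 ≤ d) (hmu : mu.colLen 0 ≤ d) :
    nuOf d mu (Sof d mu nu) = nu := by
  apply yd_ext
  intro a
  rw [rowLen_nuOf d mu (Sof_subset_Aok d mu hv) a]
  by_cases ha : a < d
  · have hexiff : (∃ j ∈ Sof d mu nu, ((j : Fin d) : ℕ) = a) ↔ mu.rowLen a < nu.rowLen a := by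
      constructor
      · rintro ⟨j, hj, rfl⟩
        simpa [Sof] using hj
      · intro h
        exact ⟨⟨a, ha⟩, by simpa [Sof] using h, rfl⟩
    by_cases hlt : mu.rowLen a < nu.rowLen a
    · rw [if_pos (hexiff.mpr hlt)]
      have := rowLen_le_succ mu hv a
      omega
    · rw [if_neg (fun h => hlt (hexiff.mp h))]
      have := le_rowLen_of_le hv.1 a
      omega
  · rw [if_neg]
    · rw [rowLen_zero_of_le hnu (by omega), rowLen_zero_of_le hmu (by omega)]
    · rintro ⟨j, _, hje⟩
      have := j.isLt
      omega

lemma Sof_nonempty (hv : VMapsTo nu mu) (hnu : nu.colLen 0 ≤ d) (hmu : mu.colLen 0 ≤ d) :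
    (Sof d mu nu).Nonempty := by
  rw [Finset.nonempty_iff_ne_empty]
  intro hcon
  apply hv.2.1
  apply yd_ext
  intro a
  by_cases ha : a < d
  · have h1 : (⟨a, ha⟩ : Fin d) ∉ Sof d mu nu := by rw [hcon]; exact Finset.notMem_empty _
    simp only [Sof, Finset.mem_filter, Finset.mem_univ, true_and, not_lt] at h1
    have h2 := le_rowLen_of_le hv.1 a
    omega
  · rw [rowLen_zero_of_le hnu (by omega), rowLen_zero_of_le hmu (by omega)]

lemma nuOf_injOn {S S' : Finset (Fin d)} (hS : S ⊆ Aok d mu) (hS' : S' ⊆ Aok d mu)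
    (h : nuOf d mu S = nuOf d mu S') : S = S' := by
  ext j
  have h1 := rowLen_nuOf d mu hS (j : ℕ)
  have h2 := rowLen_nuOf d mu hS' (j : ℕ)
  rw [h] at h1
  rw [h1] at h2
  have hiff : (∃ j' ∈ S, ((j' : Fin d) : ℕ) = (j : ℕ)) ↔ j ∈ S := by
    constructor
    · rintro ⟨j', hj', hje⟩
      rwa [← Fin.ext hje]
    · intro hj
      exact ⟨j, hj, rfl⟩
  have hiff' : (∃ j' ∈ S', ((j' : Fin d) : ℕ) = (j : ℕ)) ↔ j ∈ S' := by
    constructor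
    · rintro ⟨j', hj', hje⟩
      rwa [← Fin.ext hje]
    · intro hj
      exact ⟨j, hj, rfl⟩
  by_cases hj : j ∈ S <;> by_cases hj' : j ∈ S' <;>
    simp [hiff, hiff', hj, hj'] at h2 ⊢ <;> omega

end Backward
end YD

end HookG

lemma one_add_ne (k : ℕ) : (1 : KY) + βv * yv k ≠ 0 := by
  rw [βv, yv, ← map_mul, ← map_one (algebraMap (MvPolynomial ℕ ℚ) KY), ← map_add]
  rw [map_ne_zero_iff _ (IsFractionRing.injective (MvPolynomial ℕ ℚ) KY)]
  intro h
  have := congrArg (MvPolynomial.eval (fun _ => (0 : ℚ))) h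
  simp at this


set_option maxHeartbeats 1600000 in
/-- Proposition 4.1: `G_μ(y_λ|y)·(wt(λ/μ) − 1) = ∑_{ν↦μ} β^{|ν/μ|} G_ν(y_λ|y)`, where
`wt(λ/μ) = ∏_{i=1}^d (1+β y_{μ_i+d−i+1})/(1+β y_{λ_i+d−i+1})`. -/
theorem stmt7 (d : ℕ) (hd : 1 ≤ d) (lam mu : YoungDiagram)
    (hlam : lam.colLen 0 ≤ d) (hmu : mu.colLen 0 ≤ d) :
    Gfact d βv yv mu (yPoint d βv yv lam) *
        ((∏ i ∈ Finset.range d,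
            (1 + βv * yv (mu.rowLen i + (d - i))) / (1 + βv * yv (lam.rowLen i + (d - i)))) - 1)
      = ∑ᶠ nu ∈ {nu : YoungDiagram | nu.colLen 0 ≤ d ∧ VMapsTo nu mu},
          βv ^ (nu.card - mu.card) * Gfact d βv yv nu (yPoint d βv yv lam) := by
  classical
  set x : Fin d → KY := yPoint d βv yv lam with hxdef
  -- the legal sets
  have hT0 : (∅ : Finset (Fin d)) ∈
      Finset.univ.filter (fun S : Finset (Fin d) => S ⊆ Aok d mu) :=
    Finset.mem_filter.mpr ⟨Finset.mem_univ _, Finset.empty_subset _⟩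
  set Tset : Finset (Finset (Fin d)) :=
    (Finset.univ.filter fun S : Finset (Fin d) => S ⊆ Aok d mu).erase ∅ with hTdef
  have hTmem : ∀ {S : Finset (Fin d)}, S ∈ Tset ↔ S ≠ ∅ ∧ S ⊆ Aok d mu := by
    intro S
    rw [hTdef, Finset.mem_erase, Finset.mem_filter]
    exact ⟨fun h => ⟨h.1, h.2.2⟩, fun h => ⟨h.1, Finset.mem_univ _, h.2⟩⟩
  -- 1 + βx is an inverse
  have hP : ∀ i : Fin d, 1 + βv * x i
      = (1 + βv * yv (lam.rowLen (i : ℕ) + (d - (i : ℕ))))⁻¹ := fun i =>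
    one_add_mul_ominus _ _ (one_add_ne _)
  -- the weight factors
  have hwt : (∏ i ∈ Finset.range d,
        (1 + βv * yv (mu.rowLen i + (d - i))) / (1 + βv * yv (lam.rowLen i + (d - i))))
      = (∏ j : Fin d, (1 + βv * yv (Ee d mu (j : ℕ) + 1))) * (∏ i : Fin d, (1 + βv * x i)) := by
    have h1 : (∏ j : Fin d, (1 + βv * yv (Ee d mu (j : ℕ) + 1)))
        = ∏ i ∈ Finset.range d, (1 + βv * yv (mu.rowLen i + (d - i))) := by
      rw [Fin.prod_univ_eq_prod_range (fun j => (1 + βv * yv (Ee d mu j + 1))) d]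
      refine Finset.prod_congr rfl fun i hi => ?_
      rw [Finset.mem_range] at hi
      have : Ee d mu i + 1 = mu.rowLen i + (d - i) := by unfold Ee; omega
      rw [this]
    have h2 : (∏ i : Fin d, (1 + βv * x i))
        = ∏ i ∈ Finset.range d, (1 + βv * yv (lam.rowLen i + (d - i)))⁻¹ := by
      rw [← Fin.prod_univ_eq_prod_range (fun i => (1 + βv * yv (lam.rowLen i + (d - i)))⁻¹) d]
      exact Finset.prod_congr rfl fun i _ => hP i
    rw [h1, h2, ← Finset.prod_mul_distrib]
    exact Finset.prod_congr rfl fun i _ => div_eq_mul_inv _ _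
  -- Gfact of mu as quotient
  set V : KY := ∏ i : Fin d, ∏ j ∈ Finset.Ioi i, (x i - x j) with hVdef
  have hGmu : Gfact d βv yv mu x = DS d βv yv x mu ∅ / V := by
    have hM : (Matrix.of fun i j : Fin d =>
        bracket βv yv (x i) (mu.rowLen j + (d - 1 - (j : ℕ))) * (1 + βv * x i) ^ (j : ℕ))
        = (Matrix.of fun i j : Fin d =>
        bracket βv yv (x i) (Ee d mu j + (if j ∈ (∅ : Finset (Fin d)) then 1 else 0)) *
          (1 + βv * x i) ^ (j : ℕ)) := by
      funext i j
      simp [Ee]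
    unfold Gfact DS
    rw [hM]
  -- Gfact of nuOf S as quotient
  have hGnu : ∀ S ∈ Tset, Gfact d βv yv (nuOf d mu S) x = DS d βv yv x mu S / V := by
    intro S hS
    obtain ⟨hSne, hSA⟩ := hTmem.mp hS
    have hrow : ∀ j : Fin d, (nuOf d mu S).rowLen (j : ℕ) + (d - 1 - (j : ℕ))
        = Ee d mu (j : ℕ) + (if j ∈ S then 1 else 0) := by
      intro j
      rw [rowLen_nuOf d mu hSA]
      have hiff : (∃ j' ∈ S, ((j' : Fin d) : ℕ) = (j : ℕ)) ↔ j ∈ S := by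
        constructor
        · rintro ⟨j', hj', hje⟩
          rwa [← Fin.ext hje]
        · intro hj
          exact ⟨j, hj, rfl⟩
      rw [show (if ∃ j' ∈ S, ((j' : Fin d) : ℕ) = (j : ℕ) then 1 else 0)
          = (if j ∈ S then 1 else 0) by simp only [hiff]]
      unfold Ee
      by_cases hj : j ∈ S <;> simp only [hj, if_true, if_false] <;> omega
    have hM : (Matrix.of fun i j : Fin d =>
        bracket βv yv (x i) ((nuOf d mu S).rowLen j + (d - 1 - (j : ℕ))) *
          (1 + βv * x i) ^ (j : ℕ))
        = (Matrix.of fun i j : Fin d =>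
        bracket βv yv (x i) (Ee d mu j + (if j ∈ S then 1 else 0)) *
          (1 + βv * x i) ^ (j : ℕ)) := by
      funext i j
      simp only [Matrix.of_apply]
      rw [hrow j]
    unfold Gfact DS
    rw [hM]
  -- cards
  have hcard : ∀ S ∈ Tset, (nuOf d mu S).card - mu.card = S.card := by
    intro S hS
    rw [card_nuOf d mu (hTmem.mp hS).2]
    omega
  -- set description of the summation domain
  have hsetdesc : {nu : YoungDiagram | nu.colLen 0 ≤ d ∧ VMapsTo nu mu}
      = ↑(Tset.image (nuOf d mu)) := by
    ext nu
    simp only [Set.mem_setOf_eq, Finset.coe_image, Set.mem_image, Finset.mem_coe]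
    constructor
    · rintro ⟨hnud, hv⟩
      refine ⟨Sof d mu nu, hTmem.mpr ⟨?_, Sof_subset_Aok d mu hv⟩, nuOf_Sof d mu hv hnud hmu⟩
      exact (Sof_nonempty d mu hv hnud hmu).ne_empty
    · rintro ⟨S, hS, rfl⟩
      obtain ⟨hSne, hSA⟩ := hTmem.mp hS
      rw [← Finset.nonempty_iff_ne_empty] at hSne
      exact ⟨colLen_nuOf d mu hSA hmu, vMapsTo_nuOf d mu hSA hSne⟩
  -- rewrite the finsum as a finite sum
  rw [hsetdesc, finsum_mem_coe_finset]
  rw [Finset.sum_image (fun S hS S' hS' h =>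
    nuOf_injOn d mu (hTmem.mp hS).2 (hTmem.mp hS').2 h)]
  -- rewrite RHS summands
  rw [Finset.sum_congr rfl fun S hS => by
    rw [hGnu S hS, hcard S hS]]
  -- key algebraic identity
  have hm := master d βv yv x mu
  have hsplit : (∑ S ∈ Finset.univ.filter (fun S : Finset (Fin d) => S ⊆ Aok d mu),
        βv ^ S.card * DS d βv yv x mu S)
      = DS d βv yv x mu ∅ + ∑ S ∈ Tset, βv ^ S.card * DS d βv yv x mu S := by
    rw [← Finset.add_sum_erase _ (fun S => βv ^ S.card * DS d βv yv x mu S) hT0,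
      Finset.card_empty, pow_zero, one_mul]
  have hkey : DS d βv yv x mu ∅ *
        ((∏ j : Fin d, (1 + βv * yv (Ee d mu (j : ℕ) + 1))) * (∏ i : Fin d, (1 + βv * x i)) - 1)
      = ∑ S ∈ Tset, βv ^ S.card * DS d βv yv x mu S := by
    rw [hsplit] at hm
    linear_combination hm
  -- finish
  rw [hGmu, hwt, div_mul_eq_mul_div, hkey, Finset.sum_div]
  exact Finset.sum_congr rfl fun S _ => (mul_div_assoc _ _ _)
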